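/- Let k ≥ 1 be a natural number and let M be a deterministic finite automaton over the alphabet Bool with a finite state type σ. If the language accepted by M equals E_k = { w : List Bool | ∃ x y, w = x ++ [true] ++ y ∧ y.length = k − 1 }, then M has at least 2^k states, i.e., Fintype.card σ ≥ 2^k. -/

import Mathlib

/-!
The left quotient of a DFA's language by a word `x` is the language accepted from the state
`M.eval x`, so a DFA has at least as many states as its language has distinct left quotients.
For `E_k` the `2^k` words of length `k` have pairwise distinct left quotients: if `u` and `v`
differ at position `j`, then appending `j` letters moves that position to the `k`-th place from
the right, so exactly one of the two extended words lies in `E_k`.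
-/

open Function

namespace List

theorem getElem?_reverse_eq_some_iff_exists_append {α : Type*} {w : List α} {a : α}
    {n : ℕ} : w.reverse[n]? = some a ↔ ∃ x y, w = x ++ [a] ++ y ∧ y.length = n := by
  constructor
  · intro h
    obtain ⟨hn, ha⟩ := getElem?_eq_some_iff.1 h
    refine ⟨(w.reverse.drop (n + 1)).reverse, (w.reverse.take n).reverse, ?_,
      by simp only [length_reverse, length_take, inf_eq_left] at hn ⊢; omega⟩
    have hsplit : w.reverse = w.reverse.take n ++ [a] ++ w.reverse.drop (n + 1) := by
      rw [← ha, append_assoc, singleton_append, ← drop_eq_getElem_cons, take_append_drop]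
    conv_lhs => rw [← reverse_reverse w, hsplit]
    simp
  · rintro ⟨x, y, rfl, rfl⟩
    simp

theorem getElem?_reverse_append_of_length_lt {α : Type*} {u z : List α} {k : ℕ}
    (hu : u.length = k) (hz : z.length < k) : (u ++ z).reverse[k - 1]? = u[z.length]? := by
  rw [reverse_append, getElem?_append_right (by simp only [length_reverse]; omega),
    getElem?_reverse (by simp only [length_reverse]; omega)]
  congr 1
  simp only [length_reverse]; omega

end List

theorem DFA.card_le_of_injective_leftQuotient {α σ ι : Type*} [Fintype σ] [Fintype ι]
    (M : DFA α σ) (f : ι → List α) (hf : Injective fun i => M.accepts.leftQuotient (f i)) :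
    Fintype.card ι ≤ Fintype.card σ := by
  refine Fintype.card_le_of_injective (M.eval ∘ f) (Injective.of_comp (f := M.acceptsFrom) ?_)
  simpa only [Language.leftQuotient_accepts_apply, comp_def] using hf

theorem Language.leftQuotient_ofFn_injective {k : ℕ} {L : Language Bool}
    (hL : ∀ w, w ∈ L ↔ w.reverse[k - 1]? = some true) :
    Injective fun u : Fin k → Bool => L.leftQuotient (List.ofFn u) := by
  intro u v (huv : L.leftQuotient _ = L.leftQuotient _)
  by_contra hne
  obtain ⟨j, hj⟩ := ne_iff.1 hne
  have hlen : (List.replicate (j : ℕ) false).length < k := by simp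
  have key : List.ofFn u ++ List.replicate j false ∈ L ↔
      List.ofFn v ++ List.replicate j false ∈ L := by
    rw [← Language.mem_leftQuotient, huv, Language.mem_leftQuotient]
  simp only [hL, List.getElem?_reverse_append_of_length_lt List.length_ofFn hlen,
    List.length_replicate, List.getElem?_ofFn, Fin.eta, dif_pos j.isLt, Option.some.injEq] at key
  exact hj (Bool.eq_iff_iff.2 key)

theorem dfa_Ek_states_lower_bound_general (k : ℕ)
    {σ : Type*} [Fintype σ] (M : DFA Bool σ)
    (hM : M.accepts = {w : List Bool | ∃ x y, w = x ++ [true] ++ y ∧ y.length = k - 1}) :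
    2 ^ k ≤ Fintype.card σ := by
  have hL (w : List Bool) : w ∈ M.accepts ↔ w.reverse[k - 1]? = some true := by
    rw [hM, List.getElem?_reverse_eq_some_iff_exists_append]; rfl
  simpa using M.card_le_of_injective_leftQuotient _ (Language.leftQuotient_ofFn_injective hL)

/-- Any DFA over the alphabet `Bool` accepting the language `E_k` of words whose `k`-th
symbol from the right is `true` has at least `2^k` states. -/
theorem dfa_Ek_states_lower_bound (k : ℕ) (hk : 1 ≤ k)
    {σ : Type*} [Fintype σ] (M : DFA Bool σ)
    (hM : M.accepts = {w : List Bool | ∃ x y, w = x ++ [true] ++ y ∧ y.length = k - 1}) :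
    2 ^ k ≤ Fintype.card σ :=
  dfa_Ek_states_lower_bound_general k M hM
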